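/- arXiv:1511.07932 — 3 statements merged into one kernel-verified Lean document; each statement's English description precedes it below -/
import Mathlib

section
/- Let S be a composite set of Q^{r_1} and T a composite set of Q^{r_2}, and suppose at least one of S, T is a subcube. Then S × T is a composite set of Q^{r_1} × Q^{r_2} = Q^{r_1 + r_2}. -/
/-- The hypercube graph `Q^d` on `{0,1}^d`: two strings are adjacent iff they differ
in exactly one coordinate. -/
def Q (d : ℕ) : SimpleGraph (Fin d → Bool) where
  Adj x y := hammingDist x y = 1
  symm := by constructor; intro x y h; rwa [hammingDist_comm]
  loopless := by constructor; intro x h; simp [hammingDist_self] at h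

/-- A `c`-subcube of `Q^r`: the set of all vertices having fixed values on some
`r - c` coordinates. -/
def IsSubcube (r c : ℕ) (S : Set (Fin r → Bool)) : Prop :=
  ∃ (F : Finset (Fin r)) (val : Fin r → Bool),
    F.card = r - c ∧ S = {w | ∀ i ∈ F, w i = val i}

/-- The neighborhood of a vertex set in `Q^r`. -/
def nbhd (r : ℕ) (A : Set (Fin r → Bool)) : Set (Fin r → Bool) :=
  {v | ∃ a ∈ A, (Q r).Adj v a}

/-- A composite (cubal) set in `Q^r`: a disjoint union of subcubes of strictly
increasing dimensions, each smaller subcube lying in the neighborhood of every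
larger one. -/
def IsCompositeSet (r : ℕ) (S : Set (Fin r → Bool)) : Prop :=
  ∃ (m : ℕ) (c : Fin m → ℕ) (cube : Fin m → Set (Fin r → Bool)),
    StrictMono c ∧
    (∀ i, IsSubcube r (c i) (cube i)) ∧
    Pairwise (fun i j => Disjoint (cube i) (cube j)) ∧
    S = ⋃ i, cube i ∧
    (∀ i j, i < j → cube i ⊆ nbhd r (cube j))

/-!
If `S` is a `d`-subcube and `T` is the composite set `⋃ Tᵢ` with `Tᵢ` a `cᵢ`-subcube, then
`S × T = ⋃ S × Tᵢ`, where `S × Tᵢ` is a `(d + cᵢ)`-subcube of `Q^{r₁ + r₂}`. The dimensions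
`d + cᵢ` are still strictly increasing, the pieces stay disjoint, and since Hamming distance
is additive under concatenation, a neighbour `t'` in `Tⱼ` of `t ∈ Tᵢ` yields the neighbour
`(s, t')` in `S × Tⱼ` of `(s, t)`. The case where `T` is the subcube is symmetric.
-/

lemma hammingDist_append {α : Type*} [DecidableEq α] {m n : ℕ} (a c : Fin m → α)
    (b d : Fin n → α) :
    hammingDist (Fin.append a b) (Fin.append c d) = hammingDist a c + hammingDist b d := by
  simp only [hammingDist, Finset.card_filter, Fin.sum_univ_add, Fin.append_left, Fin.append_right]

lemma Q_adj_append_left {r₁ r₂ : ℕ} {a a' : Fin r₁ → Bool} (b : Fin r₂ → Bool)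
    (h : (Q r₁).Adj a a') : (Q (r₁ + r₂)).Adj (Fin.append a b) (Fin.append a' b) := by
  change hammingDist _ _ = 1
  rw [hammingDist_append, hammingDist_self, add_zero]
  exact h

lemma Q_adj_append_right {r₁ r₂ : ℕ} (a : Fin r₁ → Bool) {b b' : Fin r₂ → Bool}
    (h : (Q r₂).Adj b b') : (Q (r₁ + r₂)).Adj (Fin.append a b) (Fin.append a b') := by
  change hammingDist _ _ = 1
  rw [hammingDist_append, hammingDist_self, zero_add]
  exact h

section prodSet

variable {r₁ r₂ : ℕ}

def prodSet (A : Set (Fin r₁ → Bool)) (B : Set (Fin r₂ → Bool)) : Set (Fin (r₁ + r₂) → Bool) :=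
  {w | (fun i => w (Fin.castAdd r₂ i)) ∈ A ∧ (fun j => w (Fin.natAdd r₁ j)) ∈ B}

lemma append_mem_prodSet {A : Set (Fin r₁ → Bool)} {B : Set (Fin r₂ → Bool)}
    {a : Fin r₁ → Bool} {b : Fin r₂ → Bool} : Fin.append a b ∈ prodSet A B ↔ a ∈ A ∧ b ∈ B := by
  simp only [prodSet, Set.mem_ofPred_eq, Fin.append_left, Fin.append_right]

lemma prodSet_iUnion_left {ι : Type*} (A : ι → Set (Fin r₁ → Bool)) (B : Set (Fin r₂ → Bool)) :
    prodSet (⋃ i, A i) B = ⋃ i, prodSet (A i) B := by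
  ext w; simp only [prodSet, Set.mem_ofPred_eq, Set.mem_iUnion, exists_and_right]

lemma prodSet_iUnion_right {ι : Type*} (A : Set (Fin r₁ → Bool)) (B : ι → Set (Fin r₂ → Bool)) :
    prodSet A (⋃ i, B i) = ⋃ i, prodSet A (B i) := by
  ext w; simp only [prodSet, Set.mem_ofPred_eq, Set.mem_iUnion, exists_and_left]

lemma disjoint_prodSet_left {A A' : Set (Fin r₁ → Bool)} (B B' : Set (Fin r₂ → Bool))
    (h : Disjoint A A') : Disjoint (prodSet A B) (prodSet A' B') :=
  Set.disjoint_left.2 fun _ hw hw' => Set.disjoint_left.1 h hw.1 hw'.1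

lemma disjoint_prodSet_right (A A' : Set (Fin r₁ → Bool)) {B B' : Set (Fin r₂ → Bool)}
    (h : Disjoint B B') : Disjoint (prodSet A B) (prodSet A' B') :=
  Set.disjoint_left.2 fun _ hw hw' => Set.disjoint_left.1 h hw.2 hw'.2

lemma prodSet_subset_nbhd_left {A A' : Set (Fin r₁ → Bool)} (B : Set (Fin r₂ → Bool))
    (h : A ⊆ nbhd r₁ A') : prodSet A B ⊆ nbhd (r₁ + r₂) (prodSet A' B) := by
  rintro w ⟨hwA, hwB⟩
  obtain ⟨a', ha', hadj⟩ := h hwA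
  refine ⟨Fin.append a' (fun j => w (Fin.natAdd r₁ j)), append_mem_prodSet.2 ⟨ha', hwB⟩, ?_⟩
  simpa only [Fin.append_castAdd_natAdd] using
    Q_adj_append_left (fun j => w (Fin.natAdd r₁ j)) hadj

lemma prodSet_subset_nbhd_right (A : Set (Fin r₁ → Bool)) {B B' : Set (Fin r₂ → Bool)}
    (h : B ⊆ nbhd r₂ B') : prodSet A B ⊆ nbhd (r₁ + r₂) (prodSet A B') := by
  rintro w ⟨hwA, hwB⟩
  obtain ⟨b', hb', hadj⟩ := h hwB
  refine ⟨Fin.append (fun i => w (Fin.castAdd r₂ i)) b', append_mem_prodSet.2 ⟨hwA, hb'⟩, ?_⟩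
  simpa only [Fin.append_castAdd_natAdd] using
    Q_adj_append_right (fun i => w (Fin.castAdd r₂ i)) hadj

lemma IsSubcube.prodSet {a b : ℕ} {A : Set (Fin r₁ → Bool)} {B : Set (Fin r₂ → Bool)}
    (hA : IsSubcube r₁ a A) (hB : IsSubcube r₂ b B) (ha : a ≤ r₁) (hb : b ≤ r₂) :
    IsSubcube (r₁ + r₂) (a + b) (prodSet A B) := by
  obtain ⟨F₁, v₁, hF₁, rfl⟩ := hA
  obtain ⟨F₂, v₂, hF₂, rfl⟩ := hB
  refine ⟨(F₁.disjSum F₂).map finSumFinEquiv.toEmbedding, Fin.append v₁ v₂, ?_, ?_⟩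
  · rw [Finset.card_map, Finset.card_disjSum, hF₁, hF₂]
    omega
  · ext w
    simp only [_root_.prodSet, Set.mem_ofPred_eq, Finset.forall_mem_map, Sum.forall,
      Finset.inl_mem_disjSum, Finset.inr_mem_disjSum, Equiv.coe_toEmbedding,
      finSumFinEquiv_apply_left, finSumFinEquiv_apply_right, Fin.append_left, Fin.append_right]

end prodSet

lemma IsSubcube.min_dim {r c : ℕ} {S : Set (Fin r → Bool)} (h : IsSubcube r c S) :
    IsSubcube r (min c r) S := by
  obtain ⟨F, v, hF, rfl⟩ := h
  exact ⟨F, v, by omega, rfl⟩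

lemma IsSubcube.eq_univ {r c : ℕ} {S : Set (Fin r → Bool)} (h : IsSubcube r c S) (hc : r ≤ c) :
    S = Set.univ := by
  obtain ⟨F, v, hF, rfl⟩ := h
  obtain rfl : F = ∅ := Finset.card_eq_zero.1 (by omega)
  simp

/-- `IsSubcube r c` puts no bound on `c`, since `r - c` truncates; here the dimensions are capped
at `r`, which the product of subcubes needs. -/
lemma IsCompositeSet.exists_dim_le {r : ℕ} {S : Set (Fin r → Bool)} (h : IsCompositeSet r S) :
    ∃ (m : ℕ) (c : Fin m → ℕ) (cube : Fin m → Set (Fin r → Bool)),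
      StrictMono c ∧
      (∀ i, IsSubcube r (c i) (cube i) ∧ c i ≤ r) ∧
      Pairwise (fun i j => Disjoint (cube i) (cube j)) ∧
      S = ⋃ i, cube i ∧
      (∀ i j, i < j → cube i ⊆ nbhd r (cube j)) := by
  obtain ⟨m, c, cube, hmono, hsub, hdisj, hS, hnbhd⟩ := h
  -- Only the last cube can have dimension `≥ r`: two such cubes would both be all of `Q^r`.
  have hlt : ∀ i j : Fin m, i < j → c i < r := by
    intro i j hij
    by_contra! hi
    have hdisj' : Disjoint (cube i) (cube j) := hdisj hij.ne
    rw [(hsub i).eq_univ hi, (hsub j).eq_univ (hi.trans (hmono hij).le)] at hdisj'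
    exact Set.univ_nonempty.ne_empty (disjoint_self.1 hdisj')
  refine ⟨m, fun i => min (c i) r, cube, fun i j hij => ?_,
    fun i => ⟨(hsub i).min_dim, min_le_right _ _⟩, hdisj, hS, hnbhd⟩
  exact lt_min ((min_le_left _ _).trans_lt (hmono hij)) ((min_le_left _ _).trans_lt (hlt i j hij))

section product

variable {r₁ r₂ : ℕ} {S : Set (Fin r₁ → Bool)} {T : Set (Fin r₂ → Bool)}

lemma isCompositeSet_prodSet_of_isSubcube_left {d : ℕ} (hS : IsSubcube r₁ d S)
    (hT : IsCompositeSet r₂ T) : IsCompositeSet (r₁ + r₂) (prodSet S T) := by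
  obtain ⟨m, c, cube, hmono, hsub, hdisj, rfl, hnbhd⟩ := hT.exists_dim_le
  exact ⟨m, fun i => min d r₁ + c i, fun i => prodSet S (cube i),
    fun i j hij => Nat.add_lt_add_left (hmono hij) _,
    fun i => hS.min_dim.prodSet (hsub i).1 (min_le_right _ _) (hsub i).2,
    fun i j hij => disjoint_prodSet_right _ _ (hdisj hij), prodSet_iUnion_right _ _,
    fun i j hij => prodSet_subset_nbhd_right _ (hnbhd i j hij)⟩

lemma isCompositeSet_prodSet_of_isSubcube_right {d : ℕ} (hS : IsCompositeSet r₁ S)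
    (hT : IsSubcube r₂ d T) : IsCompositeSet (r₁ + r₂) (prodSet S T) := by
  obtain ⟨m, c, cube, hmono, hsub, hdisj, rfl, hnbhd⟩ := hS.exists_dim_le
  exact ⟨m, fun i => c i + min d r₂, fun i => prodSet (cube i) T,
    fun i j hij => Nat.add_lt_add_right (hmono hij) _,
    fun i => (hsub i).1.prodSet hT.min_dim (hsub i).2 (min_le_right _ _),
    fun i j hij => disjoint_prodSet_left _ _ (hdisj hij), prodSet_iUnion_left _ _,
    fun i j hij => prodSet_subset_nbhd_left _ (hnbhd i j hij)⟩

end product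

theorem composite_prod_general (r₁ r₂ : ℕ)
    (S : Set (Fin r₁ → Bool)) (T : Set (Fin r₂ → Bool))
    (hS : IsCompositeSet r₁ S) (hT : IsCompositeSet r₂ T)
    (hcube : (∃ d, IsSubcube r₁ d S) ∨ (∃ d, IsSubcube r₂ d T)) :
    IsCompositeSet (r₁ + r₂)
      {w | (fun i => w (Fin.castAdd r₂ i)) ∈ S ∧ (fun j => w (Fin.natAdd r₁ j)) ∈ T} := by
  rcases hcube with ⟨d, hSd⟩ | ⟨d, hTd⟩
  · exact isCompositeSet_prodSet_of_isSubcube_left hSd hT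
  · exact isCompositeSet_prodSet_of_isSubcube_right hS hTd

/-- If `S` and `T` are composite sets of `Q^{r₁}` and `Q^{r₂}` and at least one of
them is a subcube, then `S × T` (under concatenation) is a composite set of
`Q^{r₁+r₂} = Q^{r₁} × Q^{r₂}`. -/
theorem composite_prod (r₁ r₂ : ℕ) (h₁ : 1 ≤ r₁) (h₂ : 1 ≤ r₂)
    (S : Set (Fin r₁ → Bool)) (T : Set (Fin r₂ → Bool))
    (hS : IsCompositeSet r₁ S) (hT : IsCompositeSet r₂ T)
    (hcube : (∃ d, IsSubcube r₁ d S) ∨ (∃ d, IsSubcube r₂ d T)) :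
    IsCompositeSet (r₁ + r₂)
      {w | (fun i => w (Fin.castAdd r₂ i)) ∈ S ∧ (fun j => w (Fin.natAdd r₁ j)) ∈ T} :=
  composite_prod_general r₁ r₂ S T hS hT hcube
end

section
/- For any d > 0 and any 0 ≤ j < 2^d, the set g_d^{-1}({0, 1, ..., j}) of Gray code preimages of the first j+1 integers is a composite set of the hypercube Q^d. -/
/-- The binary-reflected Gray code list for `d` bits: the list for `d` bits is obtained
from the list for `d-1` bits by prefixing the original list with `false` and the
reversed list with `true`, then concatenating. -/
def grayList : (d : ℕ) → List (Fin d → Bool)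
  | 0 => [fun i => i.elim0]
  | d + 1 => (grayList d).map (Fin.cons false) ++ (grayList d).reverse.map (Fin.cons true)

/-- `grayIdx d w` is the position of the string `w` in the binary-reflected Gray code
list for `d` bits (the Gray code value `g_d(w)`). -/
def grayIdx (d : ℕ) (w : Fin d → Bool) : ℕ := (grayList d).idxOf w

/-!
The Gray list on `d + 1` bits is `0·L ++ 1·(reverse L)`. So an initial segment of length at most
`2 ^ d` is a copy of an initial segment of `Q^d` inside the facet `w 0 = false`, and a longer one is
that whole facet plus a copy, inside the facet `w 0 = true`, of a final segment of `L`; flipping the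
first coordinate reverses the Gray order, so that final segment is again an image of an initial
segment. `Fin.cons b` and the flip are isometries preserving subcubes, so they transport composite
decompositions, and every cube of the upper facet lies in the neighbourhood of the lower facet,
which is appended as the new largest cube. For that the cubes of the segment must be proper, which
holds as long as the segment is not all of `Q^d`; this bound is carried through the induction on
`d`.
-/

namespace List

variable {α β : Type*} [DecidableEq α] [DecidableEq β]

theorem idxOf_map_of_injective {f : α → β} (hf : Function.Injective f) (l : List α) (a : α) :
    (l.map f).idxOf (f a) = l.idxOf a := by
  induction l with
  | nil => rfl
  | cons b l ih =>
    by_cases h : b = a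
    · simp [h]
    · rw [map_cons, idxOf_cons_ne _ (hf.ne h), idxOf_cons_ne _ h, ih]

theorem Nodup.idxOf_reverse {l : List α} (hl : l.Nodup) {a : α} (ha : a ∈ l) :
    l.reverse.idxOf a = l.length - 1 - l.idxOf a := by
  have hlt : l.idxOf a < l.length := idxOf_lt_length_of_mem ha
  have hget : l.reverse[l.length - 1 - l.idxOf a]'(by rw [length_reverse]; omega) = a := by
    rw [getElem_reverse]
    convert getElem_idxOf hlt using 2
    omega
  conv_lhs => rw [← hget]
  exact (nodup_reverse.2 hl).idxOf_getElem _ _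

end List

theorem grayList_length (d : ℕ) : (grayList d).length = 2 ^ d := by
  induction d with
  | zero => rfl
  | succ d ih => simp [grayList, ih, pow_succ, mul_two]

theorem mem_grayList {d : ℕ} (w : Fin d → Bool) : w ∈ grayList d := by
  induction d with
  | zero => simp [grayList, eq_iff_true_of_subsingleton]
  | succ d ih =>
    rw [← Fin.cons_self_tail w]
    cases w 0 <;> simp [grayList, ih]

theorem grayList_nodup (d : ℕ) : (grayList d).Nodup := by
  induction d with
  | zero => simp [grayList]
  | succ d ih =>
    refine List.Nodup.append (ih.map (Fin.cons_right_injective _))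
      ((List.nodup_reverse.2 ih).map (Fin.cons_right_injective _)) ?_
    simp [List.disjoint_left]

theorem grayIdx_lt {d : ℕ} (w : Fin d → Bool) : grayIdx d w < 2 ^ d :=
  grayList_length d ▸ List.idxOf_lt_length_of_mem (mem_grayList w)

@[simp]
theorem grayIdx_cons_false {d : ℕ} (w : Fin d → Bool) :
    grayIdx (d + 1) (Fin.cons false w) = grayIdx d w := by
  rw [grayIdx, grayList, List.idxOf_append_of_mem (List.mem_map_of_mem (mem_grayList w)),
    List.idxOf_map_of_injective (Fin.cons_right_injective _), grayIdx]

@[simp]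
theorem grayIdx_cons_true {d : ℕ} (w : Fin d → Bool) :
    grayIdx (d + 1) (Fin.cons true w) = 2 ^ (d + 1) - 1 - grayIdx d w := by
  have hnot : (Fin.cons true w : Fin (d + 1) → Bool) ∉ (grayList d).map (Fin.cons false) := by
    simp
  rw [grayIdx, grayList, List.idxOf_append_of_notMem hnot, List.length_map, grayList_length,
    List.idxOf_map_of_injective (Fin.cons_right_injective _),
    (grayList_nodup d).idxOf_reverse (mem_grayList w), grayList_length, ← grayIdx]
  have := grayIdx_lt w
  omega

def flipHead {e : ℕ} (w : Fin (e + 1) → Bool) : Fin (e + 1) → Bool :=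
  Fin.cons (!w 0) (Fin.tail w)

@[simp]
theorem flipHead_cons {e : ℕ} (b : Bool) (u : Fin e → Bool) :
    flipHead (Fin.cons b u) = Fin.cons (!b) u := by
  simp [flipHead]

theorem flipHead_involutive {e : ℕ} : Function.Involutive (flipHead (e := e)) := by
  intro w
  rw [← Fin.cons_self_tail w, flipHead_cons, flipHead_cons, Bool.not_not]

theorem grayIdx_flipHead {e : ℕ} (w : Fin (e + 1) → Bool) :
    grayIdx (e + 1) (flipHead w) = 2 ^ (e + 1) - 1 - grayIdx (e + 1) w := by
  have hlt := grayIdx_lt (Fin.tail w)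
  rw [← Fin.cons_self_tail w, flipHead_cons]
  cases w 0
  · simp
  · simp only [Bool.not_true, grayIdx_cons_false, grayIdx_cons_true]
    omega

theorem hammingDist_cons {d : ℕ} (a b : Bool) (x y : Fin d → Bool) :
    hammingDist (Fin.cons a x : Fin (d + 1) → Bool) (Fin.cons b y)
      = (if a = b then 0 else 1) + hammingDist x y := by
  simp only [hammingDist, Finset.card_filter, Fin.sum_univ_succ, Fin.cons_zero, Fin.cons_succ]
  split_ifs <;> simp_all

theorem hammingDist_flipHead {e : ℕ} (x y : Fin (e + 1) → Bool) :
    hammingDist (flipHead x) (flipHead y) = hammingDist x y := by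
  rw [← Fin.cons_self_tail x, ← Fin.cons_self_tail y, flipHead_cons, flipHead_cons,
    hammingDist_cons, hammingDist_cons]
  simp

theorem cons_mem_image_cons {d : ℕ} {a b : Bool} {u : Fin d → Bool} {S : Set (Fin d → Bool)} :
    (Fin.cons a u : Fin (d + 1) → Bool) ∈ Fin.cons b '' S ↔ a = b ∧ u ∈ S := by
  simp [Fin.cons_inj, eq_comm, and_comm]

theorem isSubcube_univ (r : ℕ) : IsSubcube r r Set.univ :=
  ⟨∅, fun _ => false, by simp, by simp⟩

theorem IsSubcube.image_cons {d c : ℕ} {S : Set (Fin d → Bool)} (hS : IsSubcube d c S)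
    (hc : c ≤ d) (b : Bool) : IsSubcube (d + 1) c (Fin.cons b '' S) := by
  obtain ⟨F, val, hF, rfl⟩ := hS
  refine ⟨insert 0 (F.map (Fin.succEmb d)), Fin.cons b val, ?_, ?_⟩
  · rw [Finset.card_insert_of_notMem (by simp [Fin.succ_ne_zero]), Finset.card_map, hF]
    omega
  · ext w
    refine Fin.consCases (fun a u => ?_) w
    simp only [cons_mem_image_cons, Set.mem_ofPred_eq, Finset.forall_mem_insert,
      Finset.forall_mem_map, Fin.coe_succEmb, Fin.cons_zero, Fin.cons_succ]

theorem IsSubcube.image_flipHead {e c : ℕ} {S : Set (Fin (e + 1) → Bool)}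
    (hS : IsSubcube (e + 1) c S) : IsSubcube (e + 1) c (flipHead '' S) := by
  obtain ⟨F, val, hF, rfl⟩ := hS
  refine ⟨F, flipHead val, hF, ?_⟩
  rw [flipHead_involutive.image_eq_preimage_symm]
  ext w
  refine forall₂_congr fun i _ => ?_
  cases i using Fin.cases <;> simp [flipHead, Fin.tail, Bool.not_eq_eq_eq_not]

theorem mem_nbhd_image {r s : ℕ} {f : (Fin r → Bool) → (Fin s → Bool)}
    (hf : ∀ x y, hammingDist (f x) (f y) = hammingDist x y) {A : Set (Fin r → Bool)}
    {x : Fin r → Bool} (hx : x ∈ nbhd r A) : f x ∈ nbhd s (f '' A) := by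
  obtain ⟨a, ha, hxa⟩ := hx
  exact ⟨f a, Set.mem_image_of_mem f ha, (hf x a).trans hxa⟩

theorem image_cons_subset_nbhd_image_cons_not {d : ℕ} (b : Bool) (A : Set (Fin d → Bool)) :
    Fin.cons b '' A ⊆ nbhd (d + 1) (Fin.cons (!b) '' Set.univ) := by
  rintro _ ⟨u, -, rfl⟩
  exact ⟨Fin.cons (!b) u, Set.mem_image_of_mem _ trivial, by simp [Q, hammingDist_cons]⟩

theorem disjoint_image_cons {d : ℕ} {a b : Bool} (hab : a ≠ b) (A B : Set (Fin d → Bool)) :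
    Disjoint (Fin.cons a '' A : Set (Fin (d + 1) → Bool)) (Fin.cons b '' B) := by
  rw [Set.disjoint_left]
  rintro _ ⟨u, -, rfl⟩ hu
  exact hab (cons_mem_image_cons.1 hu).1

theorem Fin.forall_lt_of_forall_castSucc {m : ℕ} {P : Fin (m + 1) → Fin (m + 1) → Prop}
    (hcast : ∀ i j : Fin m, i < j → P i.castSucc j.castSucc)
    (hlast : ∀ i : Fin m, P i.castSucc (Fin.last m)) : ∀ i j, i < j → P i j := by
  intro i j hij
  induction j using Fin.lastCases with
  | last =>
    obtain ⟨i, rfl⟩ := Fin.exists_castSucc_eq.2 hij.ne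
    exact hlast i
  | cast j =>
    obtain ⟨i, rfl⟩ := Fin.exists_castSucc_eq.2 (hij.trans (Fin.castSucc_lt_last j)).ne
    exact hcast i j (Fin.castSucc_lt_castSucc_iff.1 hij)

structure CompositeDecomposition (r : ℕ) (S : Set (Fin r → Bool)) where
  length : ℕ
  dim : Fin length → ℕ
  cube : Fin length → Set (Fin r → Bool)
  strictMono_dim : StrictMono dim
  isSubcube : ∀ i, IsSubcube r (dim i) (cube i)
  pairwise_disjoint : Pairwise fun i j => Disjoint (cube i) (cube j)
  iUnion_cube : ⋃ i, cube i = S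
  subset_nbhd : ∀ ⦃i j⦄, i < j → cube i ⊆ nbhd r (cube j)

namespace CompositeDecomposition

variable {r s : ℕ} {S : Set (Fin r → Bool)}

theorem isCompositeSet (D : CompositeDecomposition r S) : IsCompositeSet r S :=
  ⟨D.length, D.dim, D.cube, D.strictMono_dim, D.isSubcube, D.pairwise_disjoint,
    D.iUnion_cube.symm, fun _ _ h => D.subset_nbhd h⟩

theorem cube_subset (D : CompositeDecomposition r S) (i : Fin D.length) : D.cube i ⊆ S :=
  fun _ hx => D.iUnion_cube ▸ Set.mem_iUnion_of_mem i hx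

def single {n : ℕ} (hS : IsSubcube r n S) : CompositeDecomposition r S where
  length := 1
  dim _ := n
  cube _ := S
  strictMono_dim := Subsingleton.strictMono _
  isSubcube _ := hS
  pairwise_disjoint i j hij := (hij (Subsingleton.elim i j)).elim
  iUnion_cube := Set.iUnion_const S
  subset_nbhd i j hij := (hij.ne (Subsingleton.elim i j)).elim

def map (D : CompositeDecomposition r S) (f : (Fin r → Bool) → (Fin s → Bool))
    (hf : ∀ x y, hammingDist (f x) (f y) = hammingDist x y)
    (hcube : ∀ i, IsSubcube s (D.dim i) (f '' D.cube i)) : CompositeDecomposition s (f '' S) where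
  length := D.length
  dim := D.dim
  cube i := f '' D.cube i
  strictMono_dim := D.strictMono_dim
  isSubcube := hcube
  pairwise_disjoint i j hij := by
    have hinj : f.Injective := fun x y hxy => by
      simpa [hxy] using (hf x y).symm
    exact (Set.disjoint_image_iff hinj).2 (D.pairwise_disjoint hij)
  iUnion_cube := by rw [← Set.image_iUnion, D.iUnion_cube]
  subset_nbhd i j hij := by
    rintro _ ⟨x, hx, rfl⟩
    exact mem_nbhd_image hf (D.subset_nbhd hij hx)

def snoc (D : CompositeDecomposition r S) {n : ℕ} {C : Set (Fin r → Bool)}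
    (hC : IsSubcube r n C) (hdim : ∀ i, D.dim i < n) (hdisj : Disjoint S C)
    (hnbhd : S ⊆ nbhd r C) : CompositeDecomposition r (S ∪ C) where
  length := D.length + 1
  dim := Fin.snoc D.dim n
  cube := Fin.snoc D.cube C
  strictMono_dim := Fin.forall_lt_of_forall_castSucc
    (fun i j hij => by simpa using D.strictMono_dim hij) (fun i => by simpa using hdim i)
  isSubcube i := by
    induction i using Fin.lastCases with
    | last => simpa using hC
    | cast i => simpa using D.isSubcube i
  pairwise_disjoint := (pairwise_disjoint_on _).2 <| Fin.forall_lt_of_forall_castSucc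
    (fun i j hij => by simpa using D.pairwise_disjoint hij.ne)
    (fun i => by simpa using hdisj.mono_left (D.cube_subset i))
  iUnion_cube := by rw [Set.iUnion_snoc, D.iUnion_cube]
  subset_nbhd := Fin.forall_lt_of_forall_castSucc
    (fun i j hij => by simpa using D.subset_nbhd hij)
    (fun i => by simpa using (D.cube_subset i).trans hnbhd)

def consImage (D : CompositeDecomposition r S) (hD : ∀ i, D.dim i ≤ r) (b : Bool) :
    CompositeDecomposition (r + 1) (Fin.cons b '' S) :=
  D.map _ (fun x y => by simp [hammingDist_cons]) fun i => (D.isSubcube i).image_cons (hD i) b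

def flipHeadImage {e : ℕ} {T : Set (Fin (e + 1) → Bool)}
    (D : CompositeDecomposition (e + 1) T) : CompositeDecomposition (e + 1) (flipHead '' T) :=
  D.map flipHead hammingDist_flipHead fun i => (D.isSubcube i).image_flipHead

def facetUnion (D : CompositeDecomposition r S) (hD : ∀ i, D.dim i < r) :
    CompositeDecomposition (r + 1) (Fin.cons true '' S ∪ Fin.cons false '' Set.univ) :=
  (D.consImage (fun i => (hD i).le) true).snoc ((isSubcube_univ r).image_cons le_rfl false) hD
    (disjoint_image_cons (by decide) _ _) (image_cons_subset_nbhd_image_cons_not true _)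

theorem dim_facetUnion_le (D : CompositeDecomposition r S) (hD : ∀ i, D.dim i < r)
    (i : Fin (D.length + 1)) : (D.facetUnion hD).dim i ≤ r := by
  induction i using Fin.lastCases <;>
    simp [facetUnion, snoc, consImage, map, (hD _).le]

end CompositeDecomposition

def grayPrefix (d j : ℕ) : Set (Fin d → Bool) := {w | grayIdx d w ≤ j}

theorem grayPrefix_eq_univ {d j : ℕ} (h : 2 ^ d ≤ j + 1) : grayPrefix d j = Set.univ :=
  Set.eq_univ_of_forall fun w => Nat.le_of_lt_succ ((grayIdx_lt w).trans_le h)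

theorem grayPrefix_succ_of_lt {d j : ℕ} (h : j < 2 ^ d) :
    grayPrefix (d + 1) j = Fin.cons false '' grayPrefix d j := by
  ext w
  refine Fin.consCases (fun b u => ?_) w
  have hlt := grayIdx_lt u
  cases b
  · simp [grayPrefix]
  · simp only [grayPrefix, Set.mem_ofPred_eq, cons_mem_image_cons, grayIdx_cons_true, pow_succ,
      Bool.true_eq_false, false_and, iff_false, not_le]
    omega

theorem grayPrefix_succ_of_le {d j : ℕ} (h : 2 ^ d ≤ j) :
    grayPrefix (d + 1) j = Fin.cons false '' Set.univ ∪
      Fin.cons true '' {u | 2 ^ (d + 1) - 1 - j ≤ grayIdx d u} := by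
  ext w
  refine Fin.consCases (fun b u => ?_) w
  have hlt := grayIdx_lt u
  cases b <;> simp only [grayPrefix, Set.mem_ofPred_eq, Set.mem_union, cons_mem_image_cons,
    grayIdx_cons_false, grayIdx_cons_true, Set.mem_univ, true_and, Bool.true_eq_false, false_and,
    false_or, true_or, iff_true, pow_succ] <;> omega

theorem image_flipHead_grayPrefix (e j : ℕ) :
    flipHead '' grayPrefix (e + 1) j = {u | 2 ^ (e + 1) - 1 - j ≤ grayIdx (e + 1) u} := by
  rw [flipHead_involutive.image_eq_preimage_symm]
  ext u
  have hlt := grayIdx_lt u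
  simp only [grayPrefix, Set.mem_preimage, Set.mem_ofPred_eq, grayIdx_flipHead]
  omega

theorem exists_compositeDecomposition_grayPrefix {d j : ℕ} (h : j + 1 < 2 ^ d) :
    ∃ D : CompositeDecomposition d (grayPrefix d j), ∀ i, D.dim i < d := by
  induction d generalizing j with
  | zero => simp at h
  | succ d ih =>
    rcases lt_trichotomy (j + 1) (2 ^ d) with hlt | heq | hgt
    · obtain ⟨D, hD⟩ := ih hlt
      rw [grayPrefix_succ_of_lt (by omega)]
      exact ⟨D.consImage (fun i => (hD i).le) false, fun i => (hD i).trans d.lt_succ_self⟩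
    · rw [grayPrefix_succ_of_lt (by omega), grayPrefix_eq_univ heq.ge]
      exact ⟨.single ((isSubcube_univ d).image_cons le_rfl false), fun _ => d.lt_succ_self⟩
    · obtain ⟨e, rfl⟩ : ∃ e, d = e + 1 :=
        Nat.exists_eq_succ_of_ne_zero (by rintro rfl; omega)
      have hpow : 2 ^ (e + 1 + 1) = 2 * 2 ^ (e + 1) := by rw [pow_succ, mul_comm]
      obtain ⟨D, hD⟩ := ih (j := j - 2 ^ (e + 1)) (by omega)
      have hbound : 2 ^ (e + 1 + 1) - 1 - j = 2 ^ (e + 1) - 1 - (j - 2 ^ (e + 1)) := by omega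
      rw [grayPrefix_succ_of_le (by omega : 2 ^ (e + 1) ≤ j), hbound,
        ← image_flipHead_grayPrefix, Set.union_comm]
      exact ⟨D.flipHeadImage.facetUnion hD,
        fun i => Nat.lt_succ_of_le (D.flipHeadImage.dim_facetUnion_le hD i)⟩

theorem gray_initial_segment_composite_general (d : ℕ) (j : ℕ) :
    IsCompositeSet d {w | grayIdx d w ≤ j} := by
  rcases lt_or_ge (j + 1) (2 ^ d) with h | h
  · obtain ⟨D, -⟩ := exists_compositeDecomposition_grayPrefix h
    exact D.isCompositeSet
  · change IsCompositeSet d (grayPrefix d j)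
    rw [grayPrefix_eq_univ h]
    exact (CompositeDecomposition.single (isSubcube_univ d)).isCompositeSet

/-- For any `d > 0` and `0 ≤ j < 2^d`, the set `g_d⁻¹({0, …, j})` of Gray code
preimages of the first `j+1` integers is a composite set of `Q^d`. -/
theorem gray_initial_segment_composite (d : ℕ) (hd : 0 < d) (j : ℕ) (hj : j < 2 ^ d) :
    IsCompositeSet d {w | grayIdx d w ≤ j} :=
  gray_initial_segment_composite_general d j
end

section
/- Congestion Lemma: Let G be an r-regular graph and f an embedding of G into H. Let S be an edge cut of H whose removal leaves two components H_1, H_2, with G_1 = f^{-1}(H_1), G_2 = f^{-1}(H_2). Suppose (i) for every edge (a,b) of G_i (i = 1,2), Path_f(a,b) has no edges in S; (ii) for every edge (a,b) of G with a ∈ G_1, b ∈ G_2, Path_f(a,b) has exactly one edge in S; (iii) G_1 is optimal. Then EC_f(S) is minimum over all embeddings satisfying these path conditions, and EC_f(S) = r·|V(G_1)| − 2·|E(G_1)|. -/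
/-- An embedding of `G` into `H`: a vertex bijection together with a path in `H`
assigned to each edge of `G`. -/
structure Embed {α β : Type*} (G : SimpleGraph α) (H : SimpleGraph β) where
  toEquiv : α ≃ β
  path : ∀ u v, G.Adj u v → H.Walk (toEquiv u) (toEquiv v)
  isPath : ∀ u v (h : G.Adj u v), (path u v h).IsPath
  symmPath : ∀ u v (h : G.Adj u v), path v u h.symm = (path u v h).reverse

open Classical in
/-- The length of the path assigned by `f` to an edge of `G`. -/
noncomputable def pathLen {α β : Type*} {G : SimpleGraph α} {H : SimpleGraph β}
    (f : Embed G H) : Sym2 α → ℕ :=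
  Sym2.lift ⟨fun u v => if h : G.Adj u v then (f.path u v h).length else 0, by
    intro u v
    dsimp only
    by_cases h : G.Adj u v
    · rw [dif_pos h, dif_pos h.symm, f.symmPath u v h, SimpleGraph.Walk.length_reverse]
    · rw [dif_neg h, dif_neg (fun h' => h h'.symm)]⟩

/-- `pathUses f e e'` : the path assigned by `f` to the `G`-edge `e'` uses the `H`-edge `e`. -/
def pathUses {α β : Type*} {G : SimpleGraph α} {H : SimpleGraph β}
    (f : Embed G H) (e : Sym2 β) : Sym2 α → Prop :=
  Sym2.lift ⟨fun u v => ∃ h : G.Adj u v, e ∈ (f.path u v h).edges, by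
    intro u v
    dsimp only
    apply propext
    have key : ∀ (a b : α) (h : G.Adj a b) (h' : G.Adj b a),
        (f.path b a h').edges = ((f.path a b h).edges).reverse := by
      intro a b h h'
      rw [Subsingleton.elim h' h.symm, f.symmPath a b h, SimpleGraph.Walk.edges_reverse]
    constructor
    · rintro ⟨h, he⟩
      exact ⟨h.symm, by rw [key u v h h.symm, List.mem_reverse]; exact he⟩
    · rintro ⟨h, he⟩
      refine ⟨h.symm, ?_⟩
      rw [key v u h h.symm, List.mem_reverse]
      exact he⟩

/-- The congestion `EC_f(e)` of an `H`-edge `e`: the number of edges of `G` whose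
assigned path uses `e`. -/
noncomputable def EC {α β : Type*} {G : SimpleGraph α} {H : SimpleGraph β}
    (f : Embed G H) (e : Sym2 β) : ℕ :=
  {e' : Sym2 α | e' ∈ G.edgeSet ∧ pathUses f e e'}.ncard

/-- The congestion `EC_f(S)` of a set `S` of `H`-edges. -/
noncomputable def ECS {α β : Type*} {G : SimpleGraph α} {H : SimpleGraph β}
    (f : Embed G H) (S : Finset (Sym2 β)) : ℕ :=
  ∑ e ∈ S, EC f e

/-- The wirelength of an embedding: the total length of the assigned paths over all
edges of `G`. -/
noncomputable def wirelength {α β : Type*} {G : SimpleGraph α} {H : SimpleGraph β}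
    (f : Embed G H) : ℕ :=
  ∑ᶠ e ∈ G.edgeSet, pathLen f e

/-- The minimum wirelength over all embeddings of `G` into `H`. -/
noncomputable def minWL {α β : Type*} (G : SimpleGraph α) (H : SimpleGraph β) : ℕ :=
  sInf {n | ∃ f : Embed G H, wirelength f = n}

/-- The set `I_G(A)` of edges of `G` with both endpoints in `A`. -/
def inducedEdges {α : Type*} (G : SimpleGraph α) (A : Set α) : Set (Sym2 α) :=
  {e | e ∈ G.edgeSet ∧ ∀ v ∈ e, v ∈ A}

/-- The number of edges of `G` with both endpoints in `A`. -/
noncomputable def inducedCount {α : Type*} (G : SimpleGraph α) (A : Set α) : ℕ :=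
  (inducedEdges G A).ncard

/-- `maxInduced G k` : the maximum number of induced edges over vertex sets of size `k`. -/
noncomputable def maxInduced {α : Type*} (G : SimpleGraph α) (k : ℕ) : ℕ :=
  sSup {n | ∃ A : Set α, A.ncard = k ∧ inducedCount G A = n}

/-- A vertex set is optimal if it maximizes the number of induced edges among sets
of its cardinality. -/
def IsOptimal {α : Type*} (G : SimpleGraph α) (A : Set α) : Prop :=
  inducedCount G A = maxInduced G A.ncard

open Classical

section Aux

variable {α β : Type*} {G : SimpleGraph α} {H : SimpleGraph β}

private lemma list_filter_card {γ : Type*} [DecidableEq γ] (S : Finset γ) (l : List γ)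
    (hl : l.Nodup) :
    (S.filter (· ∈ l)).card = (l.filter (· ∈ S)).length := by
  rw [← List.toFinset_card_of_nodup (hl.filter _)]
  congr 1
  ext x
  simp [List.mem_filter, and_comm]

private lemma pathUses_mk (g : Embed G H) (e : Sym2 β) {u v : α} (h : G.Adj u v) :
    pathUses g e s(u, v) ↔ e ∈ (g.path u v h).edges := by
  unfold pathUses
  rw [Sym2.lift_mk]
  constructor
  · rintro ⟨h', he⟩
    rwa [Subsingleton.elim h' h] at he
  · exact fun he => ⟨h, he⟩

private lemma per_edge_card [DecidableEq β] (g : Embed G H) (S : Finset (Sym2 β)) (V₁ : Set β)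
    (hi : ∀ u v (h : G.Adj u v),
      ((g.toEquiv u ∈ V₁ ∧ g.toEquiv v ∈ V₁) ∨ (g.toEquiv u ∉ V₁ ∧ g.toEquiv v ∉ V₁)) →
      ∀ e ∈ S, e ∉ (g.path u v h).edges)
    (hii : ∀ u v (h : G.Adj u v), g.toEquiv u ∈ V₁ → g.toEquiv v ∉ V₁ →
      ((g.path u v h).edges.filter (· ∈ S)).length = 1)
    (u v : α) (h : G.Adj u v) :
    (S.filter (fun e => e ∈ (g.path u v h).edges)).card =
      if ((g.toEquiv u ∈ V₁) ↔ (g.toEquiv v ∈ V₁)) then 0 else 1 := by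
  by_cases hu : g.toEquiv u ∈ V₁ <;> by_cases hv : g.toEquiv v ∈ V₁
  · rw [if_pos (by tauto), Finset.card_eq_zero, Finset.filter_eq_empty_iff]
    exact fun {e} he => hi u v h (Or.inl ⟨hu, hv⟩) e he
  · rw [if_neg (by tauto), list_filter_card S _ ((g.isPath u v h).edges_nodup)]
    exact hii u v h hu hv
  · rw [if_neg (by tauto), list_filter_card S _ ((g.isPath u v h).edges_nodup)]
    have key := hii v u h.symm hv hu
    rwa [g.symmPath u v h, SimpleGraph.Walk.edges_reverse, List.filter_reverse,
      List.length_reverse] at key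
  · rw [if_pos (by tauto), Finset.card_eq_zero, Finset.filter_eq_empty_iff]
    exact fun {e} he => hi u v h (Or.inr ⟨hu, hv⟩) e he

private lemma ECS_eq_card [DecidableEq β] [Fintype G.edgeSet]
    (g : Embed G H) (S : Finset (Sym2 β)) (V₁ : Set β)
    (hi : ∀ u v (h : G.Adj u v),
      ((g.toEquiv u ∈ V₁ ∧ g.toEquiv v ∈ V₁) ∨ (g.toEquiv u ∉ V₁ ∧ g.toEquiv v ∉ V₁)) →
      ∀ e ∈ S, e ∉ (g.path u v h).edges)
    (hii : ∀ u v (h : G.Adj u v), g.toEquiv u ∈ V₁ → g.toEquiv v ∉ V₁ →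
      ((g.path u v h).edges.filter (· ∈ S)).length = 1) :
    ECS g S = (G.edgeFinset.filter
      (fun e' => (¬ ∀ w ∈ e', w ∈ {u | g.toEquiv u ∈ V₁}) ∧
                 (¬ ∀ w ∈ e', w ∉ {u | g.toEquiv u ∈ V₁}))).card := by
  have h1 : ∀ e : Sym2 β, EC g e = (G.edgeFinset.filter (fun e' => pathUses g e e')).card := by
    intro e
    rw [EC, ← Set.ncard_coe_finset]
    congr 1
    ext e'
    simp [SimpleGraph.mem_edgeFinset]
  rw [ECS]
  simp_rw [h1, Finset.card_filter]
  rw [Finset.sum_comm]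
  refine Finset.sum_congr rfl fun e' he' => ?_
  revert he'
  induction e' using Sym2.ind with
  | _ u v =>
    intro he'
    have h : G.Adj u v := by simpa using he'
    rw [← Finset.card_filter,
      Finset.filter_congr (fun e (_ : e ∈ S) => pathUses_mk g e h),
      per_edge_card g S V₁ hi hii u v h]
    by_cases hu : g.toEquiv u ∈ V₁ <;> by_cases hv : g.toEquiv v ∈ V₁ <;>
      simp [Sym2.mem_iff, Set.mem_setOf_eq, hu, hv]

private lemma cut_count {α : Type*} [Fintype α] (G : SimpleGraph α) [G.LocallyFinite]
    [Fintype G.edgeSet] (r : ℕ) (hreg : G.IsRegularOfDegree r) (A : Set α) :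
    r * A.ncard = 2 * inducedCount G A +
      (G.edgeFinset.filter (fun e' => (¬ ∀ w ∈ e', w ∈ A) ∧ (¬ ∀ w ∈ e', w ∉ A))).card := by
  have hdegsum : ∑ v ∈ A.toFinset, G.degree v = r * A.ncard := by
    rw [Finset.sum_congr rfl (fun v _ => hreg v), Finset.sum_const, smul_eq_mul,
      Set.ncard_eq_toFinset_card', mul_comm]
  have hswap : ∑ v ∈ A.toFinset, G.degree v
      = ∑ e ∈ G.edgeFinset, (A.toFinset.filter (· ∈ e)).card := by
    simp_rw [← SimpleGraph.card_incidenceFinset_eq_degree, SimpleGraph.incidenceFinset_eq_filter,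
      Finset.card_filter]
    rw [Finset.sum_comm]
  have hpoint : ∀ e ∈ G.edgeFinset, (A.toFinset.filter (· ∈ e)).card =
      (if (∀ w ∈ e, w ∈ A) then 2 else if (∀ w ∈ e, w ∉ A) then 0 else 1) := by
    intro e
    induction e using Sym2.ind with
    | _ u v =>
      intro he
      have hadj : G.Adj u v := by simpa using he
      have hne : u ≠ v := hadj.ne
      have hmem : ∀ x, x ∈ A.toFinset.filter (· ∈ s(u, v)) ↔ x ∈ A ∧ (x = u ∨ x = v) := by
        intro x
        simp [Sym2.mem_iff]
      by_cases hu : u ∈ A <;> by_cases hv : v ∈ A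
      · rw [if_pos (by intro w hw; rcases Sym2.mem_iff.mp hw with rfl | rfl <;> assumption)]
        have hset : A.toFinset.filter (· ∈ s(u, v)) = {u, v} := by
          ext x
          rw [hmem]
          simp only [Finset.mem_insert, Finset.mem_singleton]
          constructor
          · exact fun hx => hx.2
          · intro hx
            refine ⟨?_, hx⟩
            rcases hx with rfl | rfl <;> assumption
        rw [hset, Finset.card_pair hne]
      · rw [if_neg (fun hall => hv (hall v (Sym2.mem_mk_right u v))),
          if_neg (fun hall => hall u (Sym2.mem_mk_left u v) hu)]
        have hset : A.toFinset.filter (· ∈ s(u, v)) = {u} := by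
          ext x
          rw [hmem]
          simp only [Finset.mem_singleton]
          constructor
          · rintro ⟨hxA, rfl | rfl⟩
            · rfl
            · exact absurd hxA hv
          · rintro rfl
            exact ⟨hu, Or.inl rfl⟩
        rw [hset, Finset.card_singleton]
      · rw [if_neg (fun hall => hu (hall u (Sym2.mem_mk_left u v))),
          if_neg (fun hall => hall v (Sym2.mem_mk_right u v) hv)]
        have hset : A.toFinset.filter (· ∈ s(u, v)) = {v} := by
          ext x
          rw [hmem]
          simp only [Finset.mem_singleton]
          constructor
          · rintro ⟨hxA, rfl | rfl⟩
            · exact absurd hxA hu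
            · rfl
          · rintro rfl
            exact ⟨hv, Or.inr rfl⟩
        rw [hset, Finset.card_singleton]
      · rw [if_neg (fun hall => hu (hall u (Sym2.mem_mk_left u v))),
          if_pos (by intro w hw; rcases Sym2.mem_iff.mp hw with rfl | rfl <;> assumption)]
        have hset : A.toFinset.filter (· ∈ s(u, v)) = ∅ := by
          ext x
          rw [hmem]
          simp only [Finset.notMem_empty, iff_false]
          rintro ⟨hxA, rfl | rfl⟩
          exacts [hu hxA, hv hxA]
        rw [hset, Finset.card_empty]
  have hindcard : inducedCount G A = (G.edgeFinset.filter (fun e => ∀ w ∈ e, w ∈ A)).card := by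
    rw [inducedCount, ← Set.ncard_coe_finset]
    congr 1
    ext e
    simp [inducedEdges, SimpleGraph.mem_edgeFinset]
  rw [← hdegsum, hswap, Finset.sum_congr rfl hpoint,
    ← Finset.sum_filter_add_sum_filter_not G.edgeFinset (fun e => ∀ w ∈ e, w ∈ A)]
  congr 1
  · rw [Finset.sum_congr rfl (fun e he => if_pos (Finset.mem_filter.mp he).2), Finset.sum_const,
      smul_eq_mul, hindcard, mul_comm]
  · rw [Finset.sum_congr rfl (fun e he => if_neg (Finset.mem_filter.mp he).2)]
    have hpt : ∀ e ∈ G.edgeFinset.filter (fun e => ¬ ∀ w ∈ e, w ∈ A),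
        (if (∀ w ∈ e, w ∉ A) then (0 : ℕ) else 1) = if ¬ (∀ w ∈ e, w ∉ A) then 1 else 0 := by
      intro e _
      by_cases hp : (∀ w ∈ e, w ∉ A)
      · rw [if_pos hp, if_neg (not_not_intro hp)]
      · rw [if_neg hp, if_pos hp]
    rw [Finset.sum_congr rfl hpt, ← Finset.card_filter, Finset.filter_filter]

end Aux

/-- Congestion Lemma: under conditions (i), (ii), (iii), `EC_f(S)` is minimum among
all embeddings satisfying the path conditions, and
`EC_f(S) = r·|V(G₁)| - 2·|E(G₁)|`. -/
theorem congestion_lemma {α β : Type*} [Fintype α] [Fintype β] [DecidableEq β]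
    (G : SimpleGraph α) (H : SimpleGraph β) [G.LocallyFinite] (r : ℕ)
    (hreg : G.IsRegularOfDegree r)
    (f : Embed G H) (S : Finset (Sym2 β)) (hSE : ↑S ⊆ H.edgeSet)
    (V₁ : Set β) (hV₁ : V₁.Nonempty) (hV₂ : V₁ᶜ.Nonempty)
    -- every edge of `H` outside `S` joins two vertices on the same side
    (hcut : ∀ e ∈ H.edgeSet, e ∉ S → ((∀ v ∈ e, v ∈ V₁) ∨ (∀ v ∈ e, v ∉ V₁)))
    -- the removal of `S` leaves the two components `H₁`, `H₂` with vertex sets `V₁`, `V₁ᶜ`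
    (hconn₁ : ((H.deleteEdges ↑S).induce V₁).Connected)
    (hconn₂ : ((H.deleteEdges ↑S).induce V₁ᶜ).Connected)
    -- (i) the path of every edge of `G₁` or `G₂` has no edge in `S`
    (hi : ∀ u v (h : G.Adj u v),
      ((f.toEquiv u ∈ V₁ ∧ f.toEquiv v ∈ V₁) ∨ (f.toEquiv u ∉ V₁ ∧ f.toEquiv v ∉ V₁)) →
      ∀ e ∈ S, e ∉ (f.path u v h).edges)
    -- (ii) the path of every edge between `G₁` and `G₂` has exactly one edge in `S`
    (hii : ∀ u v (h : G.Adj u v), f.toEquiv u ∈ V₁ → f.toEquiv v ∉ V₁ →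
      ((f.path u v h).edges.filter (· ∈ S)).length = 1)
    -- (iii) `G₁` is optimal
    (hiii : IsOptimal G {u | f.toEquiv u ∈ V₁}) :
    (∀ g : Embed G H,
      (∀ u v (h : G.Adj u v),
        ((g.toEquiv u ∈ V₁ ∧ g.toEquiv v ∈ V₁) ∨ (g.toEquiv u ∉ V₁ ∧ g.toEquiv v ∉ V₁)) →
        ∀ e ∈ S, e ∉ (g.path u v h).edges) →
      (∀ u v (h : G.Adj u v), g.toEquiv u ∈ V₁ → g.toEquiv v ∉ V₁ →
        ((g.path u v h).edges.filter (· ∈ S)).length = 1) →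
      ECS f S ≤ ECS g S) ∧
    ECS f S = r * {u | f.toEquiv u ∈ V₁}.ncard - 2 * inducedCount G {u | f.toEquiv u ∈ V₁} := by
  have hAcard : ∀ g : Embed G H, {u | g.toEquiv u ∈ V₁}.ncard = V₁.ncard := by
    intro g
    have h1 : {u | g.toEquiv u ∈ V₁} = g.toEquiv.symm '' V₁ := by
      ext x
      simp only [Set.mem_setOf_eq, Set.mem_image, Equiv.symm_apply_eq]
      constructor
      · exact fun hx => ⟨g.toEquiv x, hx, rfl⟩
      · rintro ⟨b, hb, rfl⟩; exact hb
    rw [h1, Set.ncard_image_of_injective _ g.toEquiv.symm.injective]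
  have key : ∀ (g : Embed G H),
      (∀ u v (h : G.Adj u v),
        ((g.toEquiv u ∈ V₁ ∧ g.toEquiv v ∈ V₁) ∨ (g.toEquiv u ∉ V₁ ∧ g.toEquiv v ∉ V₁)) →
        ∀ e ∈ S, e ∉ (g.path u v h).edges) →
      (∀ u v (h : G.Adj u v), g.toEquiv u ∈ V₁ → g.toEquiv v ∉ V₁ →
        ((g.path u v h).edges.filter (· ∈ S)).length = 1) →
      r * V₁.ncard = 2 * inducedCount G {u | g.toEquiv u ∈ V₁} + ECS g S := by
    intro g hgi hgii
    rw [← hAcard g, cut_count G r hreg {u | g.toEquiv u ∈ V₁}, ECS_eq_card g S V₁ hgi hgii]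
    norm_num
  have hmax : ∀ (g : Embed G H),
      inducedCount G {u | g.toEquiv u ∈ V₁} ≤ inducedCount G {u | f.toEquiv u ∈ V₁} := by
    intro g
    rw [IsOptimal] at hiii
    rw [hiii]
    apply le_csSup
    · refine ⟨Nat.card (Sym2 α), ?_⟩
      rintro n ⟨A, -, rfl⟩
      rw [inducedCount]
      exact le_trans (Set.ncard_le_ncard (Set.subset_univ _) Set.finite_univ)
        (le_of_eq (Set.ncard_univ _))
    · exact ⟨{u | g.toEquiv u ∈ V₁}, by rw [hAcard g, hAcard f], rfl⟩
  have hf := key f hi hii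
  constructor
  · intro g hgi hgii
    have hg := key g hgi hgii
    have hle := hmax g
    omega
  · rw [hAcard f]
    omega
end
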